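/- arXiv:1801.04322 — 2 statements merged into one kernel-verified Lean document; each statement's English description precedes it below -/
import Mathlib

section
/- Let s₀ > 0, v ∈ ℝ² with v ≠ 0, x₀ ∈ ℝ², and F(x) = 1/s₀ + v·(x−x₀). Then at any point x ≠ x₀ with F(x) > 0, the function u(x) = (1/|v|)·arccosh(1 + (1/2)·s₀·|v|²·|x−x₀|²/F(x)) is differentiable and satisfies |∇u(x)|·F(x) = 1. -/
noncomputable def arccosh (x : ℝ) : ℝ := Real.log (x + Real.sqrt (x ^ 2 - 1))

/-!
Write `r = x - x₀`, `c = s₀‖v‖²/2` and `u = ‖v‖⁻¹ arcosh w` with `w = 1 + c q`, `q = ‖r‖² / F`.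
The chain and quotient rules give `∇u = c (2F r - ‖r‖² v) / (‖v‖ F² √(w² - 1))`.
Since `⟪v, r⟫ = F - 1/s₀`, one has `‖2F r - ‖r‖² v‖² = ‖r‖² (4F/s₀ + ‖r‖² ‖v‖²)`, while
`w² - 1 = c ‖r‖² (2F + c ‖r‖²) / F²`. For this value of `c`,
`4F/s₀ + ‖r‖² ‖v‖² = (‖v‖² / c) (2F + c ‖r‖²)`, which is exactly `‖∇u‖² F² = 1`.
-/

open InnerProductSpace
open scoped RealInnerProductSpace Gradient

theorem hasDerivAt_arccosh {t : ℝ} (ht : 1 < t) : HasDerivAt arccosh (√(t ^ 2 - 1))⁻¹ t :=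
  Real.hasDerivAt_arcosh ht

section
variable {E : Type*} [NormedAddCommGroup E] [InnerProductSpace ℝ E]

theorem norm_smul_sub_smul_sq (a b : ℝ) (x y : E) :
    ‖a • x - b • y‖ ^ 2 = a ^ 2 * ‖x‖ ^ 2 - 2 * a * b * ⟪x, y⟫ + b ^ 2 * ‖y‖ ^ 2 := by
  rw [norm_sub_sq_real, norm_smul, norm_smul, real_inner_smul_left, real_inner_smul_right,
    mul_pow, mul_pow, Real.norm_eq_abs, Real.norm_eq_abs, sq_abs, sq_abs]
  ring

variable [CompleteSpace E]

theorem HasDerivAt.comp_hasGradientAt {g : ℝ → ℝ} {g' : ℝ} {f : E → ℝ} {f' : E} {x : E}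
    (hg : HasDerivAt g g' (f x)) (hf : HasGradientAt f f' x) :
    HasGradientAt (g ∘ f) (g' • f') x := by
  rw [hasGradientAt_iff_hasFDerivAt, map_smul]
  exact hg.comp_hasFDerivAt x hf

theorem HasGradientAt.div {f g : E → ℝ} {f' g' : E} {x : E} (hf : HasGradientAt f f' x)
    (hg : HasGradientAt g g' x) (hx : g x ≠ 0) :
    HasGradientAt (fun y => f y / g y) ((g x ^ 2)⁻¹ • (g x • f' - f x • g')) x := by
  have h := hf.hasFDerivAt.mul ((hasDerivAt_inv hx).comp_hasFDerivAt x hg.hasFDerivAt)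
  simp only [div_eq_mul_inv]
  refine h.congr_fderiv ?_
  ext y
  simp only [add_apply, smul_apply, toDual_apply_apply,
    Function.comp_apply, inner_smul_left, inner_sub_left, smul_eq_mul, RCLike.conj_to_real]
  field_simp
  ring

theorem hasGradientAt_norm_sub_sq (x₀ x : E) :
    HasGradientAt (fun y => ‖y - x₀‖ ^ 2) ((2 : ℝ) • (x - x₀)) x := by
  refine ((hasFDerivAt_id x).sub_const x₀).norm_sq.congr_fderiv ?_
  ext y
  simp [two_smul]

theorem hasGradientAt_const_add_inner_sub (a : ℝ) (v x₀ x : E) :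
    HasGradientAt (fun y => a + ⟪v, y - x₀⟫) v x := by
  have h := ((innerSL ℝ v).hasFDerivAt.comp x ((hasFDerivAt_id x).sub_const x₀)).const_add a
  refine h.congr_fderiv ?_
  ext y
  simp

theorem eikonal_linearSpeed (s₀ : ℝ) (hs₀ : 0 < s₀) (v x₀ : E) (hv : v ≠ 0)
    (F : E → ℝ) (hF : ∀ x, F x = 1 / s₀ + ⟪v, x - x₀⟫)
    (u : E → ℝ)
    (hu : ∀ x, u x = (1 / ‖v‖) * arccosh (1 + (1 / 2) * s₀ * ‖v‖ ^ 2 * ‖x - x₀‖ ^ 2 / F x))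
    (x : E) (hx : x ≠ x₀) (hFx : 0 < F x) :
    DifferentiableAt ℝ u x ∧ ‖∇ u x‖ * F x = 1 := by
  set c := (1 / 2) * s₀ * ‖v‖ ^ 2 with hc
  have hr : 0 < ‖x - x₀‖ := norm_pos_iff.2 (sub_ne_zero.2 hx)
  have hv0 : 0 < ‖v‖ := norm_pos_iff.2 hv
  have hF' : HasGradientAt F v x := by
    simpa only [← hF] using hasGradientAt_const_add_inner_sub (1 / s₀) v x₀ x
  have hq := (hasGradientAt_norm_sub_sq x₀ x).div hF' hFx.ne'
  set q := fun y => ‖y - x₀‖ ^ 2 / F y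
  set w := 1 + c * q x with hw_def
  have hw : 1 < w := by
    have : 0 < c * q x := by positivity
    linarith
  have hg : HasDerivAt (fun t => 1 / ‖v‖ * arccosh (1 + c * t))
      (1 / ‖v‖ * ((√(w ^ 2 - 1))⁻¹ * c)) (q x) := by
    have hlin : HasDerivAt (fun t => 1 + c * t) c (q x) := by
      simpa using ((hasDerivAt_id (q x)).const_mul c).const_add 1
    exact ((hasDerivAt_arccosh hw).comp (q x) hlin).const_mul (1 / ‖v‖)
  have hu' : u = (fun t => 1 / ‖v‖ * arccosh (1 + c * t)) ∘ q := by
    funext y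
    simp only [hu, Function.comp_apply, q, mul_div_assoc]
  rw [hu']
  have hG := hg.comp_hasGradientAt hq
  refine ⟨hG.differentiableAt, ?_⟩
  rw [hG.gradient]
  have hinner : ⟪x - x₀, v⟫ = F x - 1 / s₀ := by rw [real_inner_comm, hF]; ring
  have hnum : ‖F x • (2 : ℝ) • (x - x₀) - ‖x - x₀‖ ^ 2 • v‖ ^ 2
      = ‖x - x₀‖ ^ 2 * (4 * F x / s₀ + ‖x - x₀‖ ^ 2 * ‖v‖ ^ 2) := by
    rw [smul_smul, norm_smul_sub_smul_sq, hinner]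
    ring
  have hroot : √(w ^ 2 - 1) ^ 2 = c * ‖x - x₀‖ ^ 2 * (2 * F x + c * ‖x - x₀‖ ^ 2) / F x ^ 2 := by
    rw [Real.sq_sqrt (by nlinarith), hw_def]
    simp only [q]
    field_simp
    ring
  rw [← pow_eq_one_iff_of_nonneg (by positivity) two_ne_zero, mul_pow, norm_smul, norm_smul,
    mul_pow, mul_pow, hnum, Real.norm_eq_abs, Real.norm_eq_abs, sq_abs, sq_abs]
  simp only [mul_pow, inv_pow]
  rw [hroot, hc]
  field_simp
  ring

end

theorem stmt1 (s₀ : ℝ) (hs₀ : 0 < s₀) (v x₀ : EuclideanSpace ℝ (Fin 2)) (hv : v ≠ 0)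
    (F : EuclideanSpace ℝ (Fin 2) → ℝ)
    (hF : ∀ x, F x = 1 / s₀ + inner ℝ v (x - x₀))
    (u : EuclideanSpace ℝ (Fin 2) → ℝ)
    (hu : ∀ x, u x = (1 / ‖v‖) *
      arccosh (1 + (1 / 2) * s₀ * ‖v‖ ^ 2 * ‖x - x₀‖ ^ 2 / F x))
    (x : EuclideanSpace ℝ (Fin 2)) (hx : x ≠ x₀) (hFx : 0 < F x) :
    DifferentiableAt ℝ u x ∧ ‖gradient u x‖ * F x = 1 :=
  eikonal_linearSpeed s₀ hs₀ v x₀ hv F hF u hu x hx hFx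
end

section
/- In the double-refraction setup with 0 < F_ob < F_free and θ₁ ∈ [0, π/2), a real refraction angle θ₃ ∈ [0, π/2) satisfying cos θ₂ / F_ob = sin θ₃ / F_free (where sin θ₂ = (F_ob/F_free) sin θ₁) exists if and only if Υ² − sin² θ₁ < 1, where Υ = F_free/F_ob; otherwise total internal reflection occurs (θ₃ = π/2). -/
open Real

/-!
Writing `Υ = F_free / F_ob`, the second Snell law reads `sin θ₃ = Υ cos θ₂`, and the first one
gives `(Υ cos θ₂)² = Υ² - Υ² sin² θ₂ = Υ² - sin² θ₁`. Since `Υ cos θ₂ ≥ 0`, an angle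
`θ₃ ∈ [0, π/2)` with that sine exists exactly when `(Υ cos θ₂)² < 1`.
-/

lemma exists_mem_Ico_sin_eq_iff {x : ℝ} (hx : 0 ≤ x) :
    (∃ θ ∈ Set.Ico 0 (π / 2), sin θ = x) ↔ x < 1 := by
  constructor
  · rintro ⟨θ, ⟨hθ₀, hθ⟩, rfl⟩
    simpa using sin_lt_sin_of_lt_of_le_pi_div_two (by linarith [pi_pos]) le_rfl hθ
  · intro hx₁
    exact ⟨arcsin x, ⟨arcsin_nonneg.mpr hx, arcsin_lt_pi_div_two.mpr hx₁⟩,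
      sin_arcsin (by linarith) hx₁.le⟩

lemma sq_mul_cos_eq_of_mul_sin_eq {Υ θ₁ θ₂ : ℝ} (h : Υ * sin θ₂ = sin θ₁) :
    (Υ * cos θ₂) ^ 2 = Υ ^ 2 - sin θ₁ ^ 2 := by
  rw [← h]
  linear_combination Υ ^ 2 * sin_sq_add_cos_sq θ₂

theorem stmt18_general (F_ob F_free Υ θ₁ θ₂ : ℝ)
    (hob : 0 < F_ob) (hlt : F_ob < F_free) (hΥ : Υ = F_free / F_ob)
    (hθ₂ : θ₂ ∈ Set.Ico 0 (π / 2))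
    (hsnell₁ : Real.sin θ₂ = (F_ob / F_free) * Real.sin θ₁) :
    (∃ θ₃ ∈ Set.Ico 0 (π / 2),
        Real.cos θ₂ / F_ob = Real.sin θ₃ / F_free) ↔
      Υ ^ 2 - Real.sin θ₁ ^ 2 < 1 := by
  have hfree : 0 < F_free := hob.trans hlt
  have hsnell₂ (θ₃ : ℝ) : cos θ₂ / F_ob = sin θ₃ / F_free ↔ sin θ₃ = Υ * cos θ₂ := by
    rw [eq_comm, div_eq_iff hfree.ne', hΥ]
    constructor <;> intro h <;> rw [h] <;> ring
  have hΥsin : Υ * sin θ₂ = sin θ₁ := by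
    rw [hsnell₁, hΥ]
    field_simp
  have hΥpos : 0 < Υ := by rw [hΥ]; positivity
  have hnonneg : 0 ≤ Υ * cos θ₂ :=
    mul_nonneg hΥpos.le (cos_nonneg_of_mem_Icc ⟨by linarith [hθ₂.1, pi_pos], hθ₂.2.le⟩)
  simp only [hsnell₂]
  rw [exists_mem_Ico_sin_eq_iff hnonneg, ← sq_mul_cos_eq_of_mul_sin_eq hΥsin,
    sq_lt_one_iff₀ hnonneg]

theorem stmt18 (F_ob F_free Υ θ₁ θ₂ : ℝ)
    (hob : 0 < F_ob) (hlt : F_ob < F_free) (hΥ : Υ = F_free / F_ob)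
    (hθ₁ : θ₁ ∈ Set.Ico 0 (π / 2)) (hθ₂ : θ₂ ∈ Set.Ico 0 (π / 2))
    (hsnell₁ : Real.sin θ₂ = (F_ob / F_free) * Real.sin θ₁) :
    (∃ θ₃ ∈ Set.Ico 0 (π / 2),
        Real.cos θ₂ / F_ob = Real.sin θ₃ / F_free) ↔
      Υ ^ 2 - Real.sin θ₁ ^ 2 < 1 :=
  stmt18_general F_ob F_free Υ θ₁ θ₂ hob hlt hΥ hθ₂ hsnell₁
end
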